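/- Let $V$ be a finite-dimensional Hilbert space, $H = H^*$ self-adjoint on $V$, $\beta > 0$, and $\langle B\rangle := \mathrm{Tr}(Be^{-\beta H})/\mathrm{Tr}(e^{-\beta H})$. Then for every linear operator $C$ on $V$, $\langle [[C, H], C^*]\rangle \ge 0$. -/

import Mathlib

open Matrix

variable {n : ℕ}

/-- Thermal (Gibbs) average of `B` w.r.t. Hamiltonian `H` at inverse temperature `β`. -/
noncomputable def gibbsAvg (H : Matrix (Fin n) (Fin n) ℂ) (β : ℝ)
    (B : Matrix (Fin n) (Fin n) ℂ) : ℂ :=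
  (B * NormedSpace.exp ((-(β : ℂ)) • H)).trace
    / (NormedSpace.exp ((-(β : ℂ)) • H)).trace

/-!
Diagonalise `H = U diag(E) U*` and put `C' = U* C U`, `ρ = f(H) = U diag(f ∘ E) U*`. Since
`Tr([[C, H], C*] ρ) = Tr([C, H] [C*, ρ])` and both commutators are, in the eigenbasis, entrywise
multiples of `C'` and `C'*`, the trace equals `∑ᵢⱼ |C'ᵢⱼ|² (Eⱼ - Eᵢ) (f Eᵢ - f Eⱼ)`, a sum of
nonnegative terms as soon as `f` is antitone. The Gibbs weight `e^{-βH}` is `f(H)` for the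
antitone `f x = e^{-βx}`, and its trace is nonnegative.
-/

open scoped ComplexOrder

theorem Antitone.sub_mul_sub_nonneg {α : Type*} [Ring α] [LinearOrder α] [IsOrderedRing α]
    {f : α → α} (hf : Antitone f) (x y : α) :
    0 ≤ (y - x) * (f x - f y) := by
  rcases le_total x y with h | h
  · exact mul_nonneg (sub_nonneg.2 h) (sub_nonneg.2 (hf h))
  · exact mul_nonneg_of_nonpos_of_nonpos (sub_nonpos.2 h) (sub_nonpos.2 (hf h))

namespace Matrix

open Unitary

variable {ι 𝕜 : Type*} [Fintype ι]

theorem trace_lie_mul {R : Type*} [CommRing R] (A B ρ : Matrix ι ι R) :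
    trace (⁅A, B⁆ * ρ) = trace (A * ⁅B, ρ⁆) := by
  rw [Ring.lie_def, Ring.lie_def, sub_mul, mul_sub, trace_sub, trace_sub, Matrix.mul_assoc B,
    trace_mul_comm B, Matrix.mul_assoc, Matrix.mul_assoc]

variable [DecidableEq ι]

theorem lie_diagonal_apply {R : Type*} [CommRing R] (A : Matrix ι ι R) (d : ι → R) (i j : ι) :
    ⁅A, diagonal d⁆ i j = (d j - d i) * A i j := by
  rw [Ring.lie_def, sub_apply, mul_diagonal, diagonal_mul]
  ring

variable [RCLike 𝕜]

theorem trace_lie_lie_conjTranspose_diagonal_mul_diagonal (A : Matrix ι ι 𝕜) (E w : ι → ℝ) :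
    trace (⁅⁅A, diagonal ((RCLike.ofReal : ℝ → 𝕜) ∘ E)⁆, Aᴴ⁆ * diagonal (RCLike.ofReal ∘ w)) =
      ((∑ i, ∑ j, ‖A i j‖ ^ 2 * ((E j - E i) * (w i - w j)) : ℝ) : 𝕜) := by
  rw [trace_lie_mul, trace, RCLike.ofReal_sum]
  refine Finset.sum_congr rfl fun i _ => ?_
  rw [diag_apply, mul_apply, RCLike.ofReal_sum]
  refine Finset.sum_congr rfl fun j _ => ?_
  rw [lie_diagonal_apply, lie_diagonal_apply, conjTranspose_apply, RCLike.star_def]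
  simp only [Function.comp_apply]
  push_cast
  linear_combination ((E j : 𝕜) - E i) * (w i - w j) * RCLike.mul_conj (A i j)

theorem trace_conjStarAlgAut (U : unitary (Matrix ι ι 𝕜)) (A : Matrix ι ι 𝕜) :
    trace (conjStarAlgAut 𝕜 _ U A) = trace A := by
  rw [conjStarAlgAut_apply, trace_mul_cycle, coe_star_mul_self, Matrix.one_mul]

theorem exp_conjStarAlgAut (U : unitary (Matrix ι ι 𝕜)) (A : Matrix ι ι 𝕜) :
    NormedSpace.exp (conjStarAlgAut 𝕜 _ U A) = conjStarAlgAut 𝕜 _ U (NormedSpace.exp A) :=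
  exp_units_conj (toUnits U) A

namespace IsHermitian

variable {H : Matrix ι ι 𝕜} (hH : H.IsHermitian)
include hH

theorem trace_cfc_nonneg {f : ℝ → ℝ} (hf : 0 ≤ f) : 0 ≤ trace (cfc f H) := by
  rw [hH.cfc_eq, IsHermitian.cfc, trace_conjStarAlgAut, trace_diagonal]
  exact Finset.sum_nonneg fun i _ => RCLike.ofReal_nonneg.2 (hf _)

theorem trace_lie_lie_conjTranspose_mul_cfc_nonneg (C : Matrix ι ι 𝕜) {f : ℝ → ℝ}
    (hf : Antitone f) : 0 ≤ trace (⁅⁅C, H⁆, Cᴴ⁆ * cfc f H) := by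
  set φ := conjStarAlgAut 𝕜 _ hH.eigenvectorUnitary
  set E := hH.eigenvalues
  have hspec : H = φ (diagonal ((RCLike.ofReal : ℝ → 𝕜) ∘ E)) := hH.spectral_theorem
  obtain ⟨C, rfl⟩ : ∃ C', φ C' = C := ⟨φ.symm C, φ.apply_symm_apply C⟩
  have hρ : cfc f H = φ (diagonal ((RCLike.ofReal : ℝ → 𝕜) ∘ f ∘ E)) := hH.cfc_eq f
  have hconj : ⁅⁅φ C, H⁆, (φ C)ᴴ⁆ * cfc f H =
      φ (⁅⁅C, diagonal ((RCLike.ofReal : ℝ → 𝕜) ∘ E)⁆, Cᴴ⁆ *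
        diagonal ((RCLike.ofReal : ℝ → 𝕜) ∘ f ∘ E)) := by
    rw [hρ, hspec]
    simp only [Ring.lie_def, ← star_eq_conjTranspose, map_sub, map_mul, map_star]
  rw [hconj, trace_conjStarAlgAut, trace_lie_lie_conjTranspose_diagonal_mul_diagonal,
    RCLike.ofReal_nonneg]
  exact Finset.sum_nonneg fun i _ => Finset.sum_nonneg fun j _ =>
    mul_nonneg (sq_nonneg _) (hf.sub_mul_sub_nonneg _ _)

theorem exp_ofReal_smul_eq_cfc (t : ℝ) :
    NormedSpace.exp ((t : 𝕜) • H) = cfc (fun x => Real.exp (t * x)) H := by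
  conv_lhs => rw [hH.spectral_theorem]
  rw [← map_smul, exp_conjStarAlgAut, ← diagonal_smul, exp_diagonal, hH.cfc_eq, IsHermitian.cfc]
  congr 2
  funext i
  rw [Pi.coe_exp, Pi.smul_apply, smul_eq_mul, Function.comp_apply, Function.comp_apply,
    ← RCLike.ofReal_mul, ← RCLike.algebraMap_eq_ofReal, Real.exp_eq_exp_ℝ]
  exact (NormedSpace.map_exp _ (algebraMap_isometry ℝ 𝕜).continuous _).symm

end IsHermitian

end Matrix

theorem double_commutator_gibbs_nonneg_general
    (H : Matrix (Fin n) (Fin n) ℂ) (hH : H.IsHermitian)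
    (β : ℝ) (hβ : 0 < β) (C : Matrix (Fin n) (Fin n) ℂ) :
    0 ≤ (gibbsAvg H β ((C * H - H * C) * Cᴴ - Cᴴ * (C * H - H * C))).re := by
  have hexp : NormedSpace.exp ((-(β : ℂ)) • H) = cfc (fun x => Real.exp (-β * x)) H := by
    rw [← hH.exp_ofReal_smul_eq_cfc]
    simp
  have hanti : Antitone fun x => Real.exp (-β * x) := fun _ _ hxy =>
    Real.exp_le_exp.2 (mul_le_mul_of_nonpos_left hxy (neg_nonpos.2 hβ.le))
  rw [gibbsAvg, hexp, ← Ring.lie_def, ← Ring.lie_def]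
  exact (Complex.nonneg_iff.1 (div_nonneg (hH.trace_lie_lie_conjTranspose_mul_cfc_nonneg C hanti)
    (hH.trace_cfc_nonneg fun x => (Real.exp_pos _).le))).1

/-- Positivity of the double commutator in a Gibbs state: `⟨[[C,H],C*]⟩ ≥ 0`. -/
theorem double_commutator_gibbs_nonneg (hn : 0 < n)
    (H : Matrix (Fin n) (Fin n) ℂ) (hH : H.IsHermitian)
    (β : ℝ) (hβ : 0 < β) (C : Matrix (Fin n) (Fin n) ℂ) :
    0 ≤ (gibbsAvg H β ((C * H - H * C) * Cᴴ - Cᴴ * (C * H - H * C))).re :=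
  double_commutator_gibbs_nonneg_general H hH β hβ C
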